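/- With notation as in the Gel'fand–Dickey setting: let L = ∂^{n+1} − Σ_{j=0}^{n-1} u_j ∂^j, let v = (v_0,…,v_{n-1}) be a covector, V = φ(v) the unique matrix lifting determined by V^j_n = v_j (j = 0,…,n−1), the recursion relations (5.9), and the trace-zero condition, and set X := −Σ_{j=0}^{n} ∂^{-j-1} V^j_n and E := −Σ_{j=0}^{n} V^0_j ∂^j. Then E = (XL)_+, the purely differential part of XL. -/

import Mathlib

/-!  A self-contained model of the algebra of pseudodifferential operators on the
circle (or over an abstract differential ring `(R, d)`).

A pseudodifferential operator `A = ∑_{i ≤ N} a_i ∂^i` is encoded by the sequence of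
its coefficients `A : ℤ → R` (`A i = a_i`, vanishing for large `i`).  The product is
the standard one, determined by the generalized Leibniz rule
`∂^i ∘ b = ∑_{k ≥ 0} C(i,k) b^{(k)} ∂^{i-k}` with generalized binomial coefficients
`C(i,k) = Ring.choose i k`. -/

noncomputable section

namespace GD

variable {R : Type} [CommRing R]

/-- Pseudodifferential operators encoded by coefficient sequences:
`A : ℤ → R` stands for `∑ i, (A i) ∂^i`. -/
abbrev PDO (R : Type) := ℤ → R

/-- The product of pseudodifferential operators, with respect to the derivation `d`
of the coefficient ring.  (The `finsum` is a finite sum whenever the two factors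
have bounded order, which is the case throughout.) -/
def pmul (d : R → R) (A B : PDO R) : PDO R :=
  fun m => ∑ᶠ p : ℤ × ℕ,
    (Ring.choose p.1 p.2 : ℤ) • (A p.1 * d^[p.2] (B (m - p.1 + (p.2 : ℤ))))

/-- The single-term operator `a ∂^j`. -/
def term (a : R) (j : ℤ) : PDO R := fun m => if m = j then a else 0

/-- The identity operator `1 = ∂^0`. -/
def one : PDO R := term (1 : R) 0

/-- The purely differential part `A₊` of a pseudodifferential operator
(the part with nonnegative powers of `∂`); `A₋ = A - A₊`. -/
def plus (A : PDO R) : PDO R := fun m => if 0 ≤ m then A m else 0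

/-- `d` is a derivation of `R`. -/
def IsDeriv (d : R → R) : Prop :=
  (∀ a b, d (a + b) = d a + d b) ∧ ∀ a b, d (a * b) = d a * b + a * d b

end GD

/-! Read along the columns `W_a = (V^k_{n-a})_k`, the recursion for `l ≥ 1` says
`W_{a+1} = T W_a - u_{n-a} W_0` with `(T f)(k) = f(k+1) - f(k)'`, so
`V^0_M = (T^{n-M} W_0)(0) - ∑_b (T^b (u_{M+1+b} W_0))(0)`.
Since the shift and `∂` commute, the binomial theorem gives
`(T^m g)(0) = ∑_j C(-j-1, m-j) g_j^{(m-j)}`, which is the coefficient of `∂^{-m-1}` in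
`∑_j ∂^{-j-1} ∘ g_j`. Expanding `XL` with `(∂^{-j-1} ∘ b) ∘ c ∂^q = ∂^{-j-1} ∘ bc ∂^q`
(generalized Leibniz rule plus `C(i,s) C(i-s,K-s) = C(K,s) C(i,K)`) produces exactly the same
expression for its coefficient of `∂^M`. -/

namespace GD

open Finset

variable {R : Type} [CommRing R] {d : R → R}

namespace IsDeriv

def toAddMonoidHom (hd : IsDeriv d) : R →+ R := AddMonoidHom.mk' d hd.1

theorem map_sum (hd : IsDeriv d) {ι : Type*} (s : Finset ι) (f : ι → R) :
    d (∑ i ∈ s, f i) = ∑ i ∈ s, d (f i) :=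
  _root_.map_sum hd.toAddMonoidHom f s

theorem map_nsmul (hd : IsDeriv d) (k : ℕ) (x : R) : d (k • x) = k • d x :=
  _root_.map_nsmul hd.toAddMonoidHom k x

theorem iterate_map_zero (hd : IsDeriv d) (k : ℕ) : d^[k] 0 = 0 :=
  _root_.iterate_map_zero hd.toAddMonoidHom k

theorem iterate_map_sub (hd : IsDeriv d) (k : ℕ) (x y : R) :
    d^[k] (x - y) = d^[k] x - d^[k] y :=
  _root_.iterate_map_sub hd.toAddMonoidHom k x y

theorem iterate_map_neg (hd : IsDeriv d) (k : ℕ) (x : R) : d^[k] (-x) = -d^[k] x :=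
  _root_.iterate_map_neg hd.toAddMonoidHom k x

theorem iterate_map_nsmul (hd : IsDeriv d) (k n : ℕ) (x : R) : d^[k] (n • x) = n • d^[k] x :=
  _root_.iterate_map_nsmul hd.toAddMonoidHom k x n

theorem iterate_map_sum (hd : IsDeriv d) (k : ℕ) {ι : Type*} (s : Finset ι) (f : ι → R) :
    d^[k] (∑ i ∈ s, f i) = ∑ i ∈ s, d^[k] (f i) := by
  let D : AddMonoid.End R := hd.toAddMonoidHom
  have h := _root_.map_sum (D ^ k) f s
  rwa [AddMonoid.End.coe_pow] at h

theorem iterate_map_mul (hd : IsDeriv d) (n : ℕ) (x y : R) :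
    d^[n] (x * y) = ∑ ij ∈ antidiagonal n, n.choose ij.1 • (d^[ij.1] x * d^[ij.2] y) := by
  induction n with
  | zero => simp
  | succ n ih =>
    rw [sum_antidiagonal_choose_succ_nsmul (fun i j => d^[i] x * d^[j] y) n,
      Function.iterate_succ_apply', ih, hd.map_sum, add_comm, ← sum_add_distrib]
    refine sum_congr rfl fun ⟨i, j⟩ hij => ?_
    rw [hd.map_nsmul, hd.2, smul_add, n.choose_symm_of_eq_add (mem_antidiagonal.1 hij).symm,
      ← Function.iterate_succ_apply' d i, ← Function.iterate_succ_apply' d j]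

end IsDeriv

def OrderLE (A : PDO R) (N : ℤ) : Prop := ∀ i, N < i → A i = 0

theorem OrderLE.mono {A : PDO R} {N N' : ℤ} (hA : OrderLE A N) (h : N ≤ N') : OrderLE A N' :=
  fun i hi => hA i (h.trans_lt hi)

theorem OrderLE.sub {A B : PDO R} {N : ℤ} (hA : OrderLE A N) (hB : OrderLE B N) :
    OrderLE (A - B) N :=
  fun i hi => by simp [hA i hi, hB i hi]

theorem OrderLE.sum {ι : Type*} {s : Finset ι} {A : ι → PDO R} {N : ℤ}
    (hA : ∀ j ∈ s, OrderLE (A j) N) : OrderLE (∑ j ∈ s, A j) N :=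
  fun i hi => by simpa using sum_eq_zero fun j hj => hA j hj i hi

theorem orderLE_term (a : R) (j : ℤ) : OrderLE (term a j) j :=
  fun _ hi => if_neg hi.ne'

theorem pmul_apply_eq_sum (hd : IsDeriv d) {A B : PDO R} {a b : ℤ} (hA : OrderLE A a)
    (hB : OrderLE B b) (m : ℤ) :
    pmul d A B m = ∑ s ∈ range (a + b - m + 1).toNat, ∑ k ∈ range (a + b - m + 1).toNat,
      (Ring.choose (a - s) k : ℤ) • (A (a - s) * d^[k] (B (m - (a - s) + k))) := by
  set N := (a + b - m + 1).toNat
  rw [pmul, finsum_eq_finsetSum_of_support_subset _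
      (s := (range N).image (fun s : ℕ => a - s) ×ˢ range N), sum_product,
    sum_image fun _ _ _ _ h => by simpa using h]
  rintro ⟨i, k⟩ hik
  have hi : i ≤ a := not_lt.1 fun h => hik (by simp [hA i h])
  have hk : m - i + k ≤ b := not_lt.1 fun h => hik (by simp [hB _ h, hd.iterate_map_zero])
  simp only [coe_product, Set.mem_prod, coe_image, coe_range, Set.mem_image, Set.mem_Iio]
  exact ⟨⟨(a - i).toNat, by omega, by omega⟩, by omega⟩

theorem pmul_neg_left (A B : PDO R) : pmul d (-A) B = -pmul d A B := by
  funext m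
  simp only [pmul, Pi.neg_apply, neg_mul, smul_neg, finsum_neg_distrib]

theorem pmul_sub_right (hd : IsDeriv d) {A B B' : PDO R} {a b : ℤ} (hA : OrderLE A a)
    (hB : OrderLE B b) (hB' : OrderLE B' b) : pmul d A (B - B') = pmul d A B - pmul d A B' := by
  funext m
  simp [pmul_apply_eq_sum hd hA (hB.sub hB'), pmul_apply_eq_sum hd hA hB,
    pmul_apply_eq_sum hd hA hB', hd.iterate_map_sub, mul_sub]

theorem pmul_sum_left (hd : IsDeriv d) {ι : Type*} {s : Finset ι} {A : ι → PDO R} {B : PDO R}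
    {a b : ℤ} (hA : ∀ j ∈ s, OrderLE (A j) a) (hB : OrderLE B b) :
    pmul d (∑ j ∈ s, A j) B = ∑ j ∈ s, pmul d (A j) B := by
  funext m
  rw [pmul_apply_eq_sum hd (OrderLE.sum hA) hB, Finset.sum_apply,
    sum_congr rfl fun j hj => pmul_apply_eq_sum hd (hA j hj) hB m]
  simp only [Finset.sum_apply, sum_mul, smul_sum]
  exact (sum_congr rfl fun _ _ => sum_comm).trans sum_comm

theorem pmul_sum_right (hd : IsDeriv d) {ι : Type*} {s : Finset ι} {A : PDO R} {B : ι → PDO R}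
    {a b : ℤ} (hA : OrderLE A a) (hB : ∀ j ∈ s, OrderLE (B j) b) :
    pmul d A (∑ j ∈ s, B j) = ∑ j ∈ s, pmul d A (B j) := by
  funext m
  rw [pmul_apply_eq_sum hd hA (OrderLE.sum hB), Finset.sum_apply,
    sum_congr rfl fun j hj => pmul_apply_eq_sum hd hA (hB j hj) m]
  simp only [Finset.sum_apply, hd.iterate_map_sum, mul_sum, smul_sum]
  exact (sum_congr rfl fun _ _ => sum_comm).trans sum_comm

theorem pmul_term_term (hd : IsDeriv d) (x y : R) (i q m : ℤ) :
    pmul d (term x i) (term y q) m = if 0 ≤ q + i - m then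
      (Ring.choose i (q + i - m).toNat : ℤ) • (x * d^[(q + i - m).toNat] y) else 0 := by
  rw [pmul_apply_eq_sum hd (orderLE_term x i) (orderLE_term y q)]
  split_ifs with h
  · obtain ⟨K, hK⟩ : ∃ K : ℕ, q + i - m = K := ⟨_, (Int.toNat_of_nonneg h).symm⟩
    rw [add_comm i q, hK, Int.toNat_natCast, sum_eq_single 0, sum_eq_single K]
    · simp [term, show m - i + K = q by omega]
    · intro k _ hk
      simp [term, show m - i + k ≠ q by omega, hd.iterate_map_zero]
    · simp
    · intro s _ hs
      simp [term, show i - s ≠ i by omega]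
    · simp
  · rw [show (i + q - m + 1).toNat = 0 by omega, sum_range_zero]

theorem orderLE_pmul_term_term (hd : IsDeriv d) (x y : R) (i q : ℤ) :
    OrderLE (pmul d (term x i) (term y q)) (q + i) :=
  fun m hm => by rw [pmul_term_term hd, if_neg (by omega)]

theorem pmul_pmul_term_term (hd : IsDeriv d) (x b c : R) (i q : ℤ) :
    pmul d (pmul d (term x i) (term b 0)) (term c q) = pmul d (term x i) (term (b * c) q) := by
  funext m
  rw [pmul_apply_eq_sum hd (orderLE_pmul_term_term hd x b i 0) (orderLE_term c q),
    pmul_term_term hd]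
  split_ifs with h
  · obtain ⟨K, hK⟩ : ∃ K : ℕ, q + i - m = K := ⟨_, (Int.toNat_of_nonneg h).symm⟩
    have hN : (0 + i + q - m + 1).toNat = K + 1 := by omega
    have inner : ∀ s ∈ range (K + 1), ∑ k ∈ range (K + 1),
        (Ring.choose (0 + i - s) k : ℤ) • (pmul d (term x i) (term b 0) (0 + i - s) *
          d^[k] (term c q (m - (0 + i - s) + k))) =
        (Ring.choose (i - s) (K - s) * Ring.choose i s : ℤ) • (x * (d^[s] b * d^[K - s] c)) := by
      intro s hs
      rw [mem_range] at hs
      rw [sum_eq_single (K - s)]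
      · rw [pmul_term_term hd, if_pos (by omega), term, if_pos (by omega),
          show (0 + i - (0 + i - s)).toNat = s by omega, zero_add, mul_smul, smul_mul_assoc,
          mul_assoc]
      · intro k _ hk
        rw [term, if_neg (by omega), hd.iterate_map_zero, mul_zero, smul_zero]
      · intro h; exact absurd (mem_range.2 (by omega)) h
    rw [hN, sum_congr rfl inner, hK, Int.toNat_natCast, hd.iterate_map_mul,
      Nat.sum_antidiagonal_eq_sum_range_succ (fun i j => K.choose i • (d^[i] b * d^[j] c))]
    rw [mul_sum, smul_sum]
    refine sum_congr rfl fun s hs => ?_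
    rw [mul_comm, ← Ring.choose_smul_choose i (Nat.lt_succ_iff.1 (mem_range.1 hs)), smul_assoc,
      smul_comm, mul_smul_comm]
  · rw [show (0 + i + q - m + 1).toNat = 0 by omega, sum_range_zero]

theorem choose_neg_natCast_sub_one (j e : ℕ) :
    Ring.choose (-(j : ℤ) - 1) e = (-1) ^ e * ((j + e).choose j : ℤ) := by
  rw [show -(j : ℤ) - 1 = -((j + 1 : ℕ) : ℤ) by push_cast; ring, Ring.choose_neg,
    show ((j + 1 : ℕ) : ℤ) + e - 1 = ((j + e : ℕ) : ℤ) by push_cast; ring, Ring.choose_natCast,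
    Nat.choose_symm_add]
  simp [Units.smul_def, Int.negOnePow_def]

namespace IsDeriv

def shiftSubDeriv (hd : IsDeriv d) : Module.End ℤ (ℕ → R) :=
  LinearMap.funLeft ℤ R Nat.succ - hd.toAddMonoidHom.toIntLinearMap.compLeft ℕ

theorem shiftSubDeriv_apply (hd : IsDeriv d) (f : ℕ → R) (k : ℕ) :
    hd.shiftSubDeriv f k = f (k + 1) - d (f k) := rfl

theorem shiftSubDeriv_pow_apply (hd : IsDeriv d) (m : ℕ) (f : ℕ → R) (k : ℕ) :
    (hd.shiftSubDeriv ^ m) f k = ∑ j ∈ range (m + 1),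
      (Ring.choose (-(j : ℤ) - 1) (m - j) : ℤ) • d^[m - j] (f (k + j)) := by
  set S : Module.End ℤ (ℕ → R) := LinearMap.funLeft ℤ R Nat.succ
  set D : Module.End ℤ (ℕ → R) := hd.toAddMonoidHom.toIntLinearMap.compLeft ℕ
  have hS : ∀ j (g : ℕ → R) k, (S ^ j) g k = g (k + j) := by
    intro j
    induction j with
    | zero => simp
    | succ j ih => intro g k; rw [pow_succ, Module.End.mul_apply, ih]; rfl
  have hD : ∀ e (g : ℕ → R) k, ((-D) ^ e) g k = (-1 : ℤ) ^ e • d^[e] (g k) := by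
    intro e
    induction e with
    | zero => simp
    | succ e ih =>
      intro g k
      rw [pow_succ, Module.End.mul_apply, ih, pow_succ, mul_smul, neg_one_smul,
        show (-D) g k = -d (g k) from rfl, hd.iterate_map_neg, Function.iterate_succ_apply]
  have hcomm : Commute S (-D) := (show Commute S D from LinearMap.ext fun _ => rfl).neg_right
  rw [shiftSubDeriv, sub_eq_add_neg, hcomm.add_pow, LinearMap.sum_apply, Finset.sum_apply]
  refine sum_congr rfl fun j hj => ?_
  rw [Module.End.mul_apply, Module.End.mul_apply, hS, Module.End.natCast_apply, hD,
    Pi.smul_apply, hd.iterate_map_nsmul, choose_neg_natCast_sub_one,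
    Nat.add_sub_cancel' (Nat.lt_succ_iff.1 (mem_range.1 hj)), mul_smul, Nat.cast_smul_eq_nsmul]

theorem eq_shiftSubDeriv_pow_sub_sum (hd : IsDeriv d) {n : ℕ} {u : ℕ → R} {V : ℕ → ℕ → R}
    (hrec : ∀ k < n, ∀ l, 1 ≤ l → l ≤ n → V (k + 1) l = d (V k l) + V k (l - 1) + u l * V k n)
    (a : ℕ) {k : ℕ} (hk : k + a ≤ n) :
    V k (n - a) = (hd.shiftSubDeriv ^ a) (fun k => V k n) k -
      ∑ b ∈ range a, (hd.shiftSubDeriv ^ b) (fun k => V k n * u (n - a + 1 + b)) k := by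
  induction a generalizing k with
  | zero => simp
  | succ a ih =>
    set T := hd.shiftSubDeriv
    set Φ : ℕ → R := (T ^ a) (fun k => V k n) -
      ∑ b ∈ range a, (T ^ b) (fun k => V k n * u (n - a + 1 + b)) with hΦ
    have hrow : V k (n - (a + 1)) = T Φ k - V k n * u (n - a) := by
      have h := hrec k (by omega) (n - a) (by omega) (by omega)
      rw [show n - a - 1 = n - (a + 1) by omega] at h
      rw [shiftSubDeriv_apply, hΦ]
      simp only [Pi.sub_apply, Finset.sum_apply, ← ih (k := k + 1) (by omega),
        ← ih (k := k) (by omega)]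
      rw [h]
      ring
    rw [hrow, hΦ, map_sub, _root_.map_sum T, sum_range_succ', pow_succ', Module.End.mul_apply]
    simp only [Pi.sub_apply, Finset.sum_apply, pow_succ', Module.End.mul_apply, pow_zero,
      Module.End.one_apply]
    rw [show n - (a + 1) + 1 + 0 = n - a by omega]
    conv_rhs =>
      rw [sum_congr rfl fun c _ => by rw [show n - a + (c + 1) = n - a + 1 + c by omega]]
    abel

end IsDeriv

theorem sum_pmul_term_negPow_apply (hd : IsDeriv d) (g : ℕ → R) (N : ℕ) (q m : ℤ)
    (hN : q - m ≤ N) :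
    ∑ j ∈ range N, pmul d (term 1 (-(j : ℤ) - 1)) (term (g j) q) m =
      if m < q then (hd.shiftSubDeriv ^ (q - m - 1).toNat) g 0 else 0 := by
  simp only [pmul_term_term hd, one_mul]
  split_ifs with hmq
  · obtain ⟨e, he⟩ : ∃ e : ℕ, q - m - 1 = e := ⟨_, (Int.toNat_of_nonneg (by omega)).symm⟩
    rw [he, Int.toNat_natCast, hd.shiftSubDeriv_pow_apply,
      ← sum_subset (range_subset_range.2 (by omega : e + 1 ≤ N))
        fun j _ hj => if_neg (by rw [mem_range] at hj; omega)]
    refine sum_congr rfl fun j hj => ?_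
    have hj := mem_range.1 hj
    rw [if_pos (by omega), show (q + (-(j : ℤ) - 1) - m).toNat = e - j by omega, zero_add]
  · exact sum_eq_zero fun j _ => if_neg (by omega)

theorem pmul_neg_sum_sub_sum_apply (hd : IsDeriv d) (g u : ℕ → R) (n M : ℕ) :
    pmul d (-∑ j ∈ range (n + 1), pmul d (term 1 (-(j : ℤ) - 1)) (term (g j) 0))
        (term 1 ((n : ℤ) + 1) - ∑ l ∈ range n, term (u l) (l : ℤ)) M =
      -((if M ≤ n then (hd.shiftSubDeriv ^ (n - M)) g 0 else 0) -
        ∑ l ∈ range n, if M < l then (hd.shiftSubDeriv ^ (l - M - 1)) (fun k => g k * u l) 0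
          else 0) := by
  have hP : ∀ j ∈ range (n + 1), OrderLE (pmul d (term 1 (-(j : ℤ) - 1)) (term (g j) 0)) (-1) :=
    fun j _ => (orderLE_pmul_term_term hd _ _ _ _).mono (by omega)
  have hL₁ : OrderLE (term (1 : R) ((n : ℤ) + 1)) ((n : ℤ) + 1) := orderLE_term _ _
  have hL₂ : ∀ l ∈ range n, OrderLE (term (u l) (l : ℤ)) ((n : ℤ) + 1) :=
    fun l hl => (orderLE_term _ _).mono (by rw [mem_range] at hl; omega)
  have hexpand : ∀ j ∈ range (n + 1),
      pmul d (pmul d (term 1 (-(j : ℤ) - 1)) (term (g j) 0))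
        (term 1 ((n : ℤ) + 1) - ∑ l ∈ range n, term (u l) (l : ℤ)) =
      pmul d (term 1 (-(j : ℤ) - 1)) (term (g j) ((n : ℤ) + 1)) -
        ∑ l ∈ range n, pmul d (term 1 (-(j : ℤ) - 1)) (term (g j * u l) l) := fun j hj => by
    rw [pmul_sub_right hd (hP j hj) hL₁ (OrderLE.sum hL₂), pmul_sum_right hd (hP j hj) hL₂,
      pmul_pmul_term_term hd, mul_one]
    simp only [pmul_pmul_term_term hd]
  rw [pmul_neg_left, pmul_sum_left hd hP (hL₁.sub (OrderLE.sum hL₂)), sum_congr rfl hexpand,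
    sum_sub_distrib, sum_comm]
  simp only [Pi.neg_apply, Pi.sub_apply, Finset.sum_apply]
  rw [sum_pmul_term_negPow_apply hd _ _ _ _ (by omega)]
  have htoNat : ∀ l : ℕ, ((l : ℤ) - M - 1).toNat = l - M - 1 := fun l => by omega
  rw [sum_congr rfl fun l hl => sum_pmul_term_negPow_apply hd (fun j => g j * u l) (n + 1) l M
    (by rw [mem_range] at hl; omega)]
  simp only [show ((M : ℤ) < n + 1 ↔ M ≤ n) by omega,
    show ((n : ℤ) + 1 - M - 1).toNat = n - M by omega, Nat.cast_lt, htoNat]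

theorem sum_range_ite_lt {β : Type*} [AddCommMonoid β] (F : ℕ → β) {m n : ℕ} (hmn : m ≤ n)
    (hF : F n = 0) :
    ∑ l ∈ range n, (if m < l then F l else 0) = ∑ b ∈ range (n - m), F (m + 1 + b) := by
  calc ∑ l ∈ range n, (if m < l then F l else 0)
      = ∑ l ∈ range (m + 1 + (n - m)), (if m < l then F l else 0) := by
        rw [show m + 1 + (n - m) = n + 1 by omega, sum_range_succ, hF, ite_self, add_zero]
    _ = ∑ b ∈ range (n - m), F (m + 1 + b) := by
        rw [sum_range_add, sum_eq_zero fun l hl => if_neg (by rw [mem_range] at hl; omega),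
          zero_add]
        exact sum_congr rfl fun b _ => if_pos (by omega)

end GD

open GD in
theorem gd_E_eq_XL_plus_general {R : Type} [CommRing R] (d : R → R) (hd : GD.IsDeriv d)
    (n : ℕ) (u : ℕ → R) (hun : u n = 0)
    (V : ℕ → ℕ → R)
    (hrecl : ∀ k < n, ∀ l, 1 ≤ l → l ≤ n →
      V (k + 1) l = d (V k l) + V k (l - 1) + u l * V k n)
    (L X E : PDO R)
    (hL : L = term 1 ((n : ℤ) + 1) - ∑ j ∈ Finset.range n, term (u j) (j : ℤ))
    (hX : X = - ∑ j ∈ Finset.range (n + 1),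
            pmul d (term 1 (-(j : ℤ) - 1)) (term (V j n) 0))
    (hE : E = - ∑ j ∈ Finset.range (n + 1), term (V 0 j) (j : ℤ)) :
    E = GD.plus (pmul d X L) := by
  subst hL hX hE
  funext m
  rcases lt_or_ge m 0 with hm | hm
  · rw [plus, if_neg (not_le.2 hm)]
    simp only [Pi.neg_apply, Finset.sum_apply, term]
    rw [Finset.sum_eq_zero fun j _ => if_neg (by omega), neg_zero]
  obtain ⟨M, rfl⟩ := Int.eq_ofNat_of_zero_le hm
  rw [plus, if_pos hm, pmul_neg_sum_sub_sum_apply hd]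
  simp only [Pi.neg_apply, Finset.sum_apply, term, Nat.cast_inj, Finset.sum_ite_eq,
    Finset.mem_range, Nat.lt_succ_iff]
  split_ifs with hMn
  · have hV := hd.eq_shiftSubDeriv_pow_sub_sum hrecl (n - M) (k := 0) (by omega)
    rw [show n - (n - M) = M by omega] at hV
    rw [hV, sum_range_ite_lt _ hMn
      (by simp only [hun, mul_zero, ← Pi.zero_def, map_zero, Pi.zero_apply])]
    simp [show ∀ b, M + 1 + b - M - 1 = b by omega]
  · rw [Finset.sum_eq_zero fun l hl => if_neg (by rw [Finset.mem_range] at hl; omega),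
      sub_zero, neg_zero]

open GD in
/-- Proposition 5.3 i: with `L = ∂^{n+1} - ∑_{j<n} u_j ∂^j`,
`V = φ(v)` the matrix lifting determined by `V^j_n = v_j`, the recursion (5.9) and
the trace-zero condition, `X = -∑_{j≤n} ∂^{-j-1} V^j_n` and
`E = -∑_{j≤n} V^0_j ∂^j`, one has `E = (XL)₊`. -/
theorem gd_E_eq_XL_plus {R : Type} [CommRing R] (d : R → R) (hd : GD.IsDeriv d)
    (n : ℕ) (hn : 0 < n) (lam : R) (hlam : d lam = 0)
    (u : ℕ → R) (hun : u n = 0) (v : ℕ → R)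
    (V : ℕ → ℕ → R)
    (hrec0 : ∀ k < n, V (k + 1) 0 = d (V k 0) + V k n * (u 0 + lam))
    (hrecl : ∀ k < n, ∀ l, 1 ≤ l → l ≤ n →
      V (k + 1) l = d (V k l) + V k (l - 1) + u l * V k n)
    (hvn : ∀ j < n, V j n = v j)
    (htr : ∑ k ∈ Finset.range (n + 1), V k k = 0)
    (L X E : PDO R)
    (hL : L = term 1 ((n : ℤ) + 1) - ∑ j ∈ Finset.range n, term (u j) (j : ℤ))
    (hX : X = - ∑ j ∈ Finset.range (n + 1),
            pmul d (term 1 (-(j : ℤ) - 1)) (term (V j n) 0))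
    (hE : E = - ∑ j ∈ Finset.range (n + 1), term (V 0 j) (j : ℤ)) :
    E = GD.plus (pmul d X L) :=
  gd_E_eq_XL_plus_general d hd n u hun V hrecl L X E hL hX hE
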